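/- arXiv:1602.04698 — 3 statements merged into one kernel-verified Lean document; each statement's English description precedes it below -/
import Mathlib

section
/- Let G be a simple graph and let S be a clique (a set of pairwise adjacent vertices) in the total graph T(G). If S contains at least two distinct vertex vertices and at least one edge vertex, then S has cardinality at most 3; moreover, any edge vertex in S must be the edge of G joining the two vertex vertices of S (in particular S contains exactly two vertex vertices and exactly one edge vertex). -/
/-- The total graph of a simple graph `G`: its vertices are `V ⊕ G.edgeSet`
(vertex vertices and edge vertices); two distinct vertices are adjacent exactly when
the corresponding elements of `G` are adjacent vertices, edges sharing an endpoint,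
or an incident vertex–edge pair. -/
def totalGraph {V : Type*} (G : SimpleGraph V) : SimpleGraph (V ⊕ G.edgeSet) where
  Adj x y :=
    match x, y with
    | Sum.inl u, Sum.inl w => G.Adj u w
    | Sum.inl u, Sum.inr e => u ∈ (e : Sym2 V)
    | Sum.inr e, Sum.inl u => u ∈ (e : Sym2 V)
    | Sum.inr e, Sum.inr f => e ≠ f ∧ ∃ u, u ∈ (e : Sym2 V) ∧ u ∈ (f : Sym2 V)
  symm := by
    constructor
    rintro (u | e) (w | f) h
    · exact h.symm
    · exact h
    · exact h
    · exact ⟨h.1.symm, h.2.imp fun u hu => ⟨hu.2, hu.1⟩⟩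
  loopless := by
    constructor
    rintro (u | e) h
    · exact G.loopless.irrefl u h
    · exact h.1 rfl

/-!
An edge vertex of a clique of `T(G)` is adjacent to every vertex vertex of the clique, i.e. the
edge contains all of them. A `Sym2` element contains at most two points, so two distinct vertex
vertices `u, v` pin every edge vertex down to `s(u, v)`, and one edge vertex `s(u, v)` in turn
leaves no room for a third vertex vertex. Hence the clique is `{u, v, s(u, v)}`.
-/

namespace totalGraph

variable {V : Type*} {G : SimpleGraph V}

theorem adj_inl_inr {u : V} {e : G.edgeSet} :
    (totalGraph G).Adj (Sum.inl u) (Sum.inr e) ↔ u ∈ (e : Sym2 V) :=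
  Iff.rfl

theorem mem_of_isClique {S : Set (V ⊕ G.edgeSet)} (hS : (totalGraph G).IsClique S) {u : V}
    {e : G.edgeSet} (hu : Sum.inl u ∈ S) (he : Sum.inr e ∈ S) : u ∈ (e : Sym2 V) :=
  adj_inl_inr.mp (hS hu he Sum.inl_ne_inr)

theorem coe_eq_of_isClique {S : Set (V ⊕ G.edgeSet)} (hS : (totalGraph G).IsClique S)
    {u v : V} (huv : u ≠ v) (hu : Sum.inl u ∈ S) (hv : Sum.inl v ∈ S) {e : G.edgeSet}
    (he : Sum.inr e ∈ S) : (e : Sym2 V) = s(u, v) :=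
  (Sym2.mem_and_mem_iff huv).mp ⟨mem_of_isClique hS hu he, mem_of_isClique hS hv he⟩

theorem subset_of_isClique {S : Set (V ⊕ G.edgeSet)} (hS : (totalGraph G).IsClique S)
    {u v : V} (huv : u ≠ v) (hu : Sum.inl u ∈ S) (hv : Sum.inl v ∈ S) {e : G.edgeSet}
    (he : Sum.inr e ∈ S) : S ⊆ {Sum.inl u, Sum.inl v, Sum.inr e} := by
  have he_eq := coe_eq_of_isClique hS huv hu hv he
  rintro (w | f) hx
  · have hw : w ∈ s(u, v) := he_eq ▸ mem_of_isClique hS hx he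
    rcases Sym2.mem_iff.mp hw with rfl | rfl <;> simp
  · have hf : f = e := Subtype.ext ((coe_eq_of_isClique hS huv hu hv hx).trans he_eq.symm)
    simp [hf]

end totalGraph

/-- A mixed clique in `T(G)` containing at least two vertex vertices has size at most 3,
every edge vertex in it is the edge joining those two vertex vertices, and it contains
no vertex vertex other than those two. -/
theorem stmt_0 {V : Type*} (G : SimpleGraph V) (S : Set (V ⊕ G.edgeSet))
    (hS : (totalGraph G).IsClique S) (u v : V) (huv : u ≠ v)
    (hu : Sum.inl u ∈ S) (hv : Sum.inl v ∈ S)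
    (e : G.edgeSet) (he : Sum.inr e ∈ S) :
    S.ncard ≤ 3 ∧
      (∀ f : G.edgeSet, Sum.inr f ∈ S → (f : Sym2 V) = s(u, v)) ∧
      (∀ w : V, Sum.inl w ∈ S → w = u ∨ w = v) := by
  have hsub := totalGraph.subset_of_isClique hS huv hu hv he
  refine ⟨?_, fun f hf => totalGraph.coe_eq_of_isClique hS huv hu hv hf, fun w hw => ?_⟩
  · classical
    refine (Set.ncard_le_ncard hsub).trans ?_
    rw [← Finset.coe_pair, ← Finset.coe_insert, Set.ncard_coe_finset]
    exact Finset.card_le_three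
  · simpa using hsub hw
end

section
/- For every natural number n ≥ 2, the line graph of the complete graph K_n is isomorphic to the total graph of the complete graph K_{n−1}; that is, L(K_n) ≅ T(K_{n−1}). -/
/-! Adjoining an apex `none` to `K_V` gives `K_{Option V}`, whose edges are the apex edges
`s(none, some v)`, one for each vertex `v`, and the images of the edges of `K_V`. Two apex edges
always meet at the apex, matching the adjacency of any two distinct vertices of `K_V`; an apex
edge meets an edge of `K_V` exactly when `v` is an endpoint of it; and two edges of `K_V` meet
as they do in `K_V`. Hence `L(K_{Option V}) ≅ T(K_V)` for every type `V`; for `n ≥ 1` take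
`Fin n ≃ Option (Fin (n - 1))`, and for `n = 0` both graphs are empty. -/

open SimpleGraph

section OptionCone

variable {V : Type*}

variable (V) in
def toOptionEdge :
    V ⊕ (⊤ : SimpleGraph V).edgeSet → (⊤ : SimpleGraph (Option V)).edgeSet
  | .inl v => ⟨s(none, some v), by simp⟩
  | .inr e => ⟨(e : Sym2 V).map some, by
      rw [edgeSet_top, Set.mem_compl_iff, Sym2.mem_diagSet,
        Sym2.isDiag_map (Option.some_injective V)]
      exact not_isDiag_of_mem_edgeSet _ e.2⟩

lemma mem_toOptionEdge_inl {x : Option V} {v : V} :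
    x ∈ (toOptionEdge V (.inl v) : Sym2 (Option V)) ↔ x = none ∨ x = some v :=
  Sym2.mem_iff

lemma none_notMem_toOptionEdge_inr (e : (⊤ : SimpleGraph V).edgeSet) :
    none ∉ (toOptionEdge V (.inr e) : Sym2 (Option V)) := by
  simp [toOptionEdge, Sym2.mem_map]

lemma some_mem_toOptionEdge_inr {v : V} {e : (⊤ : SimpleGraph V).edgeSet} :
    some v ∈ (toOptionEdge V (.inr e) : Sym2 (Option V)) ↔ v ∈ (e : Sym2 V) := by
  simp [toOptionEdge, Sym2.mem_map]

lemma toOptionEdge_injective : Function.Injective (toOptionEdge V) := by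
  rintro (u | e) (w | f) h <;> have h' := congrArg Subtype.val h
  · exact congrArg _ (Option.some_injective V (Sym2.congr_right.mp h'))
  · exact absurd (h' ▸ mem_toOptionEdge_inl.mpr (.inl rfl)) (none_notMem_toOptionEdge_inr f)
  · exact absurd (h' ▸ mem_toOptionEdge_inl.mpr (.inl rfl)) (none_notMem_toOptionEdge_inr e)
  · exact congrArg _ (Subtype.ext (Sym2.map.injective (Option.some_injective V) h'))

lemma toOptionEdge_surjective : Function.Surjective (toOptionEdge V) := by
  rintro ⟨e, he⟩
  induction e using Sym2.ind with
  | _ a b =>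
    rw [mem_edgeSet, top_adj] at he
    rcases a with _ | u <;> rcases b with _ | v
    · exact absurd rfl he
    · exact ⟨.inl v, rfl⟩
    · exact ⟨.inl u, Subtype.ext Sym2.eq_swap⟩
    · exact ⟨.inr ⟨s(u, v), by simpa using he⟩, rfl⟩

lemma totalGraph_top_adj_iff {a b : V ⊕ (⊤ : SimpleGraph V).edgeSet} :
    (totalGraph (⊤ : SimpleGraph V)).Adj a b ↔ a ≠ b ∧
      ∃ x, x ∈ (toOptionEdge V a : Sym2 (Option V)) ∧
        x ∈ (toOptionEdge V b : Sym2 (Option V)) := by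
  rcases a with u | e <;> rcases b with w | f <;>
    simp [totalGraph, Option.exists, mem_toOptionEdge_inl, none_notMem_toOptionEdge_inr,
      some_mem_toOptionEdge_inr]

variable (V) in
noncomputable def totalGraphTopIsoLineGraphTopOption :
    totalGraph (⊤ : SimpleGraph V) ≃g (⊤ : SimpleGraph (Option V)).lineGraph where
  toEquiv := .ofBijective _ ⟨toOptionEdge_injective, toOptionEdge_surjective⟩
  map_rel_iff' {a b} := by
    rw [lineGraph_adj_iff_exists, totalGraph_top_adj_iff]
    exact and_congr_left' toOptionEdge_injective.ne_iff

end OptionCone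

theorem stmt_11_general (n : ℕ) :
    Nonempty ((⊤ : SimpleGraph (Fin n)).lineGraph ≃g
      totalGraph (⊤ : SimpleGraph (Fin (n - 1)))) := by
  cases n with
  | zero =>
    rw [Nat.zero_sub]
    exact ⟨{ toEquiv := Equiv.equivOfIsEmpty _ _, map_rel_iff' := fun {a} => isEmptyElim a }⟩
  | succ m =>
    exact ⟨(Iso.completeGraph (finSuccEquiv m)).lineGraph.trans
      (totalGraphTopIsoLineGraphTopOption (Fin m)).symm⟩

/-- For `n ≥ 2`, the line graph of `K n` is isomorphic to the total graph of `K (n-1)`. -/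
theorem stmt_11 (n : ℕ) (hn : 2 ≤ n) :
    Nonempty ((⊤ : SimpleGraph (Fin n)).lineGraph ≃g
      totalGraph (⊤ : SimpleGraph (Fin (n - 1)))) :=
  stmt_11_general n
end

section
/- Let G be a simple graph with finite vertex degrees and let e be an edge of G with endpoints u and v. Set A = {u} ∪ {edge vertices of edges of G incident to u other than e} and B = {v} ∪ {edge vertices of edges of G incident to v other than e}. Then A and B are disjoint cliques in the total graph T(G), of cardinalities deg_G(u) and deg_G(v) respectively, and the neighbourhood of the edge vertex e in T(G) is exactly A ∪ B. -/
namespace totalGraph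

variable {V : Type*} (G : SimpleGraph V)

@[simp]
lemma adj_inr_inl (e : G.edgeSet) (w : V) :
    (totalGraph G).Adj (Sum.inr e) (Sum.inl w) ↔ w ∈ (e : Sym2 V) :=
  Iff.rfl

@[simp]
lemma adj_inr_inr (e f : G.edgeSet) :
    (totalGraph G).Adj (Sum.inr e) (Sum.inr f) ↔
      e ≠ f ∧ ∃ w, w ∈ (e : Sym2 V) ∧ w ∈ (f : Sym2 V) :=
  Iff.rfl

-- The set `A` of the statement for `u`, and `B` for `v`.
def star (e : G.edgeSet) (u : V) : Set (V ⊕ G.edgeSet) :=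
  {Sum.inl u} ∪ Sum.inr '' {f : G.edgeSet | u ∈ (f : Sym2 V) ∧ f ≠ e}

@[simp]
lemma inl_mem_star {e : G.edgeSet} {u w : V} : Sum.inl w ∈ star G e u ↔ w = u := by
  simp [star]

@[simp]
lemma inr_mem_star {e f : G.edgeSet} {u : V} :
    Sum.inr f ∈ star G e u ↔ u ∈ (f : Sym2 V) ∧ f ≠ e := by
  simp [star]

lemma isClique_star (e : G.edgeSet) (u : V) : (totalGraph G).IsClique (star G e u) := by
  rintro (w | f) hx (w' | f') hy hne <;> simp only [inl_mem_star, inr_mem_star] at hx hy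
  · exact absurd (hx.trans hy.symm) (by simpa using hne)
  · exact hx ▸ hy.1
  · exact hy ▸ hx.1
  · exact ⟨by simpa using hne, u, hx.1, hy.1⟩

lemma ncard_incident_edges [G.LocallyFinite] (u : V) :
    {f : G.edgeSet | u ∈ (f : Sym2 V)}.ncard = G.degree u := by
  classical
  rw [← Set.ncard_image_of_injective _ Subtype.val_injective, ← G.card_incidenceSet_eq_degree,
    Set.fintypeCard_eq_ncard]
  congr 1
  ext f
  simp [SimpleGraph.incidenceSet, and_comm]

lemma ncard_star [G.LocallyFinite] {e : G.edgeSet} {u : V} (hu : u ∈ (e : Sym2 V)) :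
    (star G e u).ncard = G.degree u := by
  classical
  set T : Set G.edgeSet := {f | u ∈ (f : Sym2 V)}
  have hT : T.Finite :=
    (G.incidenceSet u).toFinite.preimage Subtype.val_injective.injOn |>.subset
      fun f hf => ⟨f.2, hf⟩
  have hinl : (Sum.inl u : V ⊕ G.edgeSet) ∉ Sum.inr '' (T \ {e}) := by simp
  -- `Sum.inl u` takes the place of the excluded edge `e`.
  change (insert (Sum.inl u) (Sum.inr '' (T \ {e}))).ncard = _
  rw [Set.ncard_insert_of_notMem hinl (hT.sdiff.image _),
    Set.ncard_image_of_injective _ Sum.inr_injective,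
    Set.ncard_sdiff_singleton_add_one (show e ∈ T from hu) hT, ncard_incident_edges]

variable {G} {e : G.edgeSet} {u v : V}

lemma edge_eq_of_mem_of_mem (he : (e : Sym2 V) = s(u, v)) (huv : u ≠ v) {f : G.edgeSet}
    (hu : u ∈ (f : Sym2 V)) (hv : v ∈ (f : Sym2 V)) : f = e :=
  Subtype.ext (((Sym2.mem_and_mem_iff huv).mp ⟨hu, hv⟩).trans he.symm)

lemma disjoint_star_star (he : (e : Sym2 V) = s(u, v)) (huv : u ≠ v) :
    Disjoint (star G e u) (star G e v) := by
  rw [Set.disjoint_left]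
  rintro (w | f) hu hv <;> simp only [inl_mem_star, inr_mem_star] at hu hv
  · exact huv (hu.symm.trans hv)
  · exact hu.2 (edge_eq_of_mem_of_mem he huv hu.1 hv.1)

lemma neighborSet_inr_eq_star_union_star (he : (e : Sym2 V) = s(u, v)) :
    (totalGraph G).neighborSet (Sum.inr e) = star G e u ∪ star G e v := by
  ext (w | f)
  · simp [he, Sym2.mem_iff]
  · simp only [SimpleGraph.mem_neighborSet, adj_inr_inr, Set.mem_union, inr_mem_star, he,
      Sym2.mem_iff, exists_eq_or_imp, exists_eq_left]
    tauto

end totalGraph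

open totalGraph in
/-- For an edge `e = uv` of `G`, the sets `A = {u} ∪ {edges ≠ e incident to u}` and
`B = {v} ∪ {edges ≠ e incident to v}` are disjoint cliques in `T(G)` of sizes
`deg u` and `deg v`, and the neighbourhood of the edge vertex `e` is exactly `A ∪ B`. -/
theorem stmt_15 {V : Type*} (G : SimpleGraph V) [G.LocallyFinite]
    (e : G.edgeSet) (u v : V) (he : (e : Sym2 V) = s(u, v)) :
    Disjoint
        ({Sum.inl u} ∪ Sum.inr '' {f : G.edgeSet | u ∈ (f : Sym2 V) ∧ f ≠ e} :
          Set (V ⊕ G.edgeSet))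
        ({Sum.inl v} ∪ Sum.inr '' {f : G.edgeSet | v ∈ (f : Sym2 V) ∧ f ≠ e}) ∧
      (totalGraph G).IsClique
        ({Sum.inl u} ∪ Sum.inr '' {f : G.edgeSet | u ∈ (f : Sym2 V) ∧ f ≠ e}) ∧
      (totalGraph G).IsClique
        ({Sum.inl v} ∪ Sum.inr '' {f : G.edgeSet | v ∈ (f : Sym2 V) ∧ f ≠ e}) ∧
      ({Sum.inl u} ∪ Sum.inr '' {f : G.edgeSet | u ∈ (f : Sym2 V) ∧ f ≠ e} :
          Set (V ⊕ G.edgeSet)).ncard = G.degree u ∧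
      ({Sum.inl v} ∪ Sum.inr '' {f : G.edgeSet | v ∈ (f : Sym2 V) ∧ f ≠ e} :
          Set (V ⊕ G.edgeSet)).ncard = G.degree v ∧
      (totalGraph G).neighborSet (Sum.inr e) =
        ({Sum.inl u} ∪ Sum.inr '' {f : G.edgeSet | u ∈ (f : Sym2 V) ∧ f ≠ e}) ∪
          ({Sum.inl v} ∪ Sum.inr '' {f : G.edgeSet | v ∈ (f : Sym2 V) ∧ f ≠ e}) := by
  have huv : G.Adj u v := by simpa [he] using e.2
  have hu : u ∈ (e : Sym2 V) := he ▸ Sym2.mem_mk_left u v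
  have hv : v ∈ (e : Sym2 V) := he ▸ Sym2.mem_mk_right u v
  exact ⟨disjoint_star_star he huv.ne, isClique_star G e u, isClique_star G e v,
    ncard_star G hu, ncard_star G hv, neighborSet_inr_eq_star_union_star he⟩
end
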